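/- Let α_1,…,α_l be pairwise distinct points of the open unit disc 𝔻, let A_1 = λ_1 I, …, A_k = λ_k I ∈ Ω_2 be scalar matrices and A_{k+1},…,A_l ∈ Ω_2 be non-scalar matrices. Then there exists a holomorphic map ψ : 𝔻 → Ω_2 with ψ(α_j) = A_j for j = 1,…,l if and only if there exists a holomorphic map φ = (φ_1,φ_2) : 𝔻 → 𝔾_2 with φ(α_j) = σ(A_j) for j = 1,…,l and φ_2′(α_j) = λ_j φ_1′(α_j) for j = 1,…,k. -/

import Mathlib

open Metric Matrix Polynomial Set Filter

noncomputable section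

/-- The open unit disc in `ℂ`. -/
def unitDisc : Set ℂ := Metric.ball 0 1

/-- The spectral ball `Ω_n`: matrices whose spectral radius is `< 1`, i.e. all
eigenvalues have modulus `< 1`. -/
def SpectralBall (n : ℕ) : Set (Matrix (Fin n) (Fin n) ℂ) :=
  {A | ∀ z ∈ spectrum ℂ A, ‖z‖ < 1}

/-- `σ(A) = (σ_1(A), …, σ_n(A))`, the signed coefficients of the characteristic
polynomial: `det (t•I − A) = ∑_{j=0}^n (−1)^j σ_j(A) t^(n−j)`.  Index `i : Fin n`
corresponds to `σ_{i+1}`. -/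
def sigmaCoeff (n : ℕ) (A : Matrix (Fin n) (Fin n) ℂ) : Fin n → ℂ :=
  fun i => (-1 : ℂ) ^ ((i : ℕ) + 1) * A.charpoly.coeff (n - ((i : ℕ) + 1))

/-- The symmetrized polydisc `𝔾_n = σ(Ω_n)`. -/
def SymPolydisc (n : ℕ) : Set (Fin n → ℂ) :=
  sigmaCoeff n '' SpectralBall n

/-- A matrix is scalar if it is `c • I` for some `c : ℂ`. -/
def IsScalarMatrix {n : ℕ} (A : Matrix (Fin n) (Fin n) ℂ) : Prop :=
  ∃ c : ℂ, A = c • (1 : Matrix (Fin n) (Fin n) ℂ)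

/-- A matrix is cyclic (non-derogatory) if it admits a cyclic vector `v`, i.e.
`v, A v, …, A^(n−1) v` span `ℂ^n`. -/
def IsCyclicMatrix {n : ℕ} (A : Matrix (Fin n) (Fin n) ℂ) : Prop :=
  ∃ v : Fin n → ℂ,
    Submodule.span ℂ (Set.range fun i : Fin n => (A ^ (i : ℕ)).mulVec v) = ⊤

/-- A matrix-valued map is holomorphic on the unit disc if each entry is. -/
def MatHolo {n : ℕ} (ψ : ℂ → Matrix (Fin n) (Fin n) ℂ) : Prop :=
  ∀ i j : Fin n, DifferentiableOn ℂ (fun z => ψ z i j) unitDisc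

/-- A matrix-valued map is bounded on the unit disc. -/
def MatBounded {n : ℕ} (ψ : ℂ → Matrix (Fin n) (Fin n) ℂ) : Prop :=
  ∃ C : ℝ, ∀ z ∈ unitDisc, ∀ i j : Fin n, ‖ψ z i j‖ ≤ C

/-- The spectral radius of a matrix. -/
def specRad (n : ℕ) (A : Matrix (Fin n) (Fin n) ℂ) : ℝ :=
  sSup ((fun z => ‖z‖) '' spectrum ℂ A)

/-- The Lempert function of the spectral ball `Ω_n`. -/
def lempertOmega (n : ℕ) (A B : Matrix (Fin n) (Fin n) ℂ) : ℝ :=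
  sInf {r : ℝ | ∃ α : ℂ, α ∈ unitDisc ∧ ‖α‖ = r ∧
    ∃ ψ : ℂ → Matrix (Fin n) (Fin n) ℂ, MatHolo ψ ∧
      Set.MapsTo ψ unitDisc (SpectralBall n) ∧ ψ 0 = A ∧ ψ α = B}

/-- The Kobayashi–Royden pseudometric of the spectral ball `Ω_n`. -/
def kobayashiOmega (n : ℕ) (A B : Matrix (Fin n) (Fin n) ℂ) : ℝ :=
  sInf {γ : ℝ | 0 ≤ γ ∧ ∃ ψ : ℂ → Matrix (Fin n) (Fin n) ℂ, MatHolo ψ ∧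
    Set.MapsTo ψ unitDisc (SpectralBall n) ∧ ψ 0 = A ∧
    ∀ i j : Fin n, (γ : ℂ) * deriv (fun z => ψ z i j) 0 = B i j}

/-!
If `ψ` solves the problem on `Ω₂`, then `φ = σ ∘ ψ` solves the one on `𝔾₂`: at a node where
`ψ = λ I`, differentiating `det ψ = ψ₀₀ ψ₁₁ - ψ₀₁ ψ₁₀` gives `(det ψ)' = λ (tr ψ)'`.

Conversely, let `φ = (s, p)`. After conjugating all data by one constant transvection, every
non-scalar `A_j` has a nonzero lower-left entry. A matrix `[[s/2 + a, h/b], [b, s/2 - a]]` with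
`h = s²/4 - p - a²` has trace `s` and determinant `p` wherever `b ≠ 0` or `h = 0`, and every `X`
with `X₁₀ ≠ 0` is of this form with `b = X₁₀`. Interpolate `a` by a polynomial and take
`b = ∏_{j scalar} (z - α_j) · exp g`, so that `b` vanishes exactly, and simply, at the scalar
nodes. There `a = 0` and `s = 2 λ_j`, so the condition `p' = λ_j s'` makes `h` vanish to second
order and `h / b` is holomorphic. Since `σ` determines the characteristic polynomial, hence the
spectrum, `σ ∘ ψ = φ` puts `ψ` in `Ω₂`.
-/

open Topology

lemma charpoly_eq_of_sigmaCoeff_eq {n : ℕ} {A B : Matrix (Fin n) (Fin n) ℂ}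
    (h : sigmaCoeff n A = sigmaCoeff n B) : A.charpoly = B.charpoly := by
  have hdeg (M : Matrix (Fin n) (Fin n) ℂ) : M.charpoly.natDegree = n := by simp
  have hlead (M : Matrix (Fin n) (Fin n) ℂ) : M.charpoly.coeff n = 1 := by
    simpa [hdeg] using M.charpoly_monic.coeff_natDegree
  ext m
  rcases lt_trichotomy m n with hm | rfl | hm
  · have hi := congrFun h ⟨n - 1 - m, by omega⟩
    simp only [sigmaCoeff, show n - (n - 1 - m + 1) = m by omega] at hi
    exact mul_left_cancel₀ (pow_ne_zero _ (neg_ne_zero.mpr one_ne_zero)) hi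
  · rw [hlead, hlead]
  · rw [coeff_eq_zero_of_natDegree_lt (by rwa [hdeg]),
      coeff_eq_zero_of_natDegree_lt (by rwa [hdeg])]

lemma sigmaCoeff_mem_symPolydisc_iff {n : ℕ} {A : Matrix (Fin n) (Fin n) ℂ} :
    sigmaCoeff n A ∈ SymPolydisc n ↔ A ∈ SpectralBall n := by
  refine ⟨fun ⟨B, hB, hBA⟩ z hz => hB z ?_, fun hA => ⟨A, hA, rfl⟩⟩
  rwa [Matrix.mem_spectrum_iff_isRoot_charpoly, charpoly_eq_of_sigmaCoeff_eq hBA,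
    ← Matrix.mem_spectrum_iff_isRoot_charpoly]

lemma sigmaCoeff_mul_mul_of_mul_eq_one {n : ℕ} {P Q : Matrix (Fin n) (Fin n) ℂ} (hQP : Q * P = 1)
    (X : Matrix (Fin n) (Fin n) ℂ) : sigmaCoeff n (P * X * Q) = sigmaCoeff n X := by
  have : (P * X * Q).charpoly = X.charpoly := by
    rw [Matrix.charpoly_mul_comm, ← Matrix.mul_assoc, hQP, Matrix.one_mul]
  unfold sigmaCoeff
  rw [this]

lemma sigmaCoeff_two (A : Matrix (Fin 2) (Fin 2) ℂ) :
    sigmaCoeff 2 A = ![A.trace, A.det] := by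
  funext i
  fin_cases i
  · simp [sigmaCoeff, Matrix.trace_eq_neg_charpoly_coeff A]
  · simp [sigmaCoeff, Matrix.det_eq_sign_charpoly_coeff A]

lemma MatHolo.trace {n : ℕ} {ψ : ℂ → Matrix (Fin n) (Fin n) ℂ} (hψ : MatHolo ψ) :
    DifferentiableOn ℂ (fun z => (ψ z).trace) unitDisc := by
  simp only [Matrix.trace, Matrix.diag]
  exact DifferentiableOn.fun_sum fun i _ => hψ i i

lemma MatHolo.det {n : ℕ} {ψ : ℂ → Matrix (Fin n) (Fin n) ℂ} (hψ : MatHolo ψ) :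
    DifferentiableOn ℂ (fun z => (ψ z).det) unitDisc := by
  simp only [Matrix.det_apply]
  exact DifferentiableOn.fun_sum fun σ _ =>
    (DifferentiableOn.fun_finsetProd fun i _ => hψ (σ i) i).const_smul _

lemma MatHolo.sigmaCoeff_two {ψ : ℂ → Matrix (Fin 2) (Fin 2) ℂ} (hψ : MatHolo ψ) :
    DifferentiableOn ℂ (fun z => sigmaCoeff 2 (ψ z)) unitDisc := by
  refine differentiableOn_pi.2 fun i => ?_
  fin_cases i
  · simpa [_root_.sigmaCoeff_two] using hψ.trace
  · simpa [_root_.sigmaCoeff_two] using hψ.det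

lemma MatHolo.mul_mul_const {n : ℕ} {ψ : ℂ → Matrix (Fin n) (Fin n) ℂ} (hψ : MatHolo ψ)
    (P Q : Matrix (Fin n) (Fin n) ℂ) : MatHolo (fun z => P * ψ z * Q) := by
  intro i j
  simp only [Matrix.mul_apply]
  exact DifferentiableOn.fun_sum fun l _ =>
    (DifferentiableOn.fun_sum fun k _ => (hψ k l).const_mul _).mul_const _

lemma deriv_det_eq_mul_deriv_trace {ψ : ℂ → Matrix (Fin 2) (Fin 2) ℂ} {z₀ c : ℂ}
    (hψ : ∀ i j, DifferentiableAt ℂ (fun z => ψ z i j) z₀) (hz₀ : ψ z₀ = c • 1) :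
    deriv (fun z => (ψ z).det) z₀ = c * deriv (fun z => (ψ z).trace) z₀ := by
  obtain ⟨h00, h01, h10, h11⟩ : ψ z₀ 0 0 = c ∧ ψ z₀ 0 1 = 0 ∧ ψ z₀ 1 0 = 0 ∧ ψ z₀ 1 1 = c := by
    simp [hz₀]
  simp only [Matrix.det_fin_two, Matrix.trace_fin_two]
  rw [deriv_fun_sub (by fun_prop) (by fun_prop), deriv_fun_mul (hψ 0 0) (hψ 1 1),
    deriv_fun_mul (hψ 0 1) (hψ 1 0), deriv_fun_add (hψ 0 0) (hψ 1 1), h00, h01, h10, h11]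
  ring

lemma transvection_neg_mul_transvection (t : ℂ) :
    (Matrix.transvection 1 0 (-t) * Matrix.transvection 1 0 t : Matrix (Fin 2) (Fin 2) ℂ) = 1 := by
  rw [Matrix.transvection_mul_transvection_same 1 0 (by decide), neg_add_cancel,
    Matrix.transvection_zero]

lemma transvection_mul_transvection_neg (t : ℂ) :
    (Matrix.transvection 1 0 t * Matrix.transvection 1 0 (-t) : Matrix (Fin 2) (Fin 2) ℂ) = 1 := by
  simpa using transvection_neg_mul_transvection (-t)

lemma transvection_conj_apply_one_zero (A : Matrix (Fin 2) (Fin 2) ℂ) (t : ℂ) :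
    (Matrix.transvection 1 0 (-t) * A * Matrix.transvection 1 0 t : Matrix (Fin 2) (Fin 2) ℂ) 1 0
      = A 1 0 + (A 1 1 - A 0 0) * t - A 0 1 * t ^ 2 := by
  simp only [Matrix.transvection_mul_apply_same, Matrix.mul_transvection_apply_same]
  ring

lemma exists_transvection_conj_apply_one_zero_ne_zero {ι : Type*} (s : Finset ι)
    (A : ι → Matrix (Fin 2) (Fin 2) ℂ) (hA : ∀ i ∈ s, ¬ IsScalarMatrix (A i)) :
    ∃ t : ℂ, ∀ i ∈ s,
      (Matrix.transvection 1 0 (-t) * A i * Matrix.transvection 1 0 t :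
        Matrix (Fin 2) (Fin 2) ℂ) 1 0 ≠ 0 := by
  set q : ι → ℂ[X] := fun i =>
    C (A i 1 0) + C (A i 1 1 - A i 0 0) * X - C (A i 0 1) * X ^ 2
  have hq : ∀ i ∈ s, q i ≠ 0 := by
    intro i hi hqi
    have h0 : A i 1 0 = 0 := by simpa [q] using congrArg (coeff · 0) hqi
    have h1 : A i 1 1 = A i 0 0 := by simpa [q, sub_eq_zero] using congrArg (coeff · 1) hqi
    have h2 : A i 0 1 = 0 := by simpa [q] using congrArg (coeff · 2) hqi
    refine hA i hi ⟨A i 0 0, ?_⟩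
    ext a b
    fin_cases a <;> fin_cases b <;> simp [h0, h1, h2]
  obtain ⟨t, ht⟩ := Infinite.exists_notMem_finset (∏ i ∈ s, q i).roots.toFinset
  refine ⟨t, fun i hi => ?_⟩
  have hprod : (∏ i ∈ s, q i).eval t ≠ 0 := fun h0 =>
    ht (by simpa [Finset.prod_ne_zero_iff.mpr hq] using h0)
  rw [eval_prod, Finset.prod_ne_zero_iff] at hprod
  rw [transvection_conj_apply_one_zero]
  simpa [q] using hprod i hi

lemma exists_differentiable_interp {l : ℕ} {α : Fin l → ℂ} (hα : Function.Injective α)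
    (r : Fin l → ℂ) : ∃ f : ℂ → ℂ, Differentiable ℂ f ∧ ∀ j, f (α j) = r j :=
  ⟨fun z => (Lagrange.interpolate Finset.univ α r).eval z,
    (Lagrange.interpolate Finset.univ α r).differentiable,
    fun j => Lagrange.eval_interpolate_at_node r hα.injOn (Finset.mem_univ j)⟩

lemma exists_differentiable_interp_ne_zero {l : ℕ} {α : Fin l → ℂ} (hα : Function.Injective α)
    {r : Fin l → ℂ} (hr : ∀ j, r j ≠ 0) :
    ∃ f : ℂ → ℂ, Differentiable ℂ f ∧ (∀ j, f (α j) = r j) ∧ ∀ z, f z ≠ 0 := by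
  obtain ⟨g, hg, hgα⟩ := exists_differentiable_interp hα fun j => Complex.log (r j)
  exact ⟨fun z => Complex.exp (g z), Complex.differentiable_exp.comp hg,
    fun j => by simp only [hgα, Complex.exp_log (hr j)], fun z => Complex.exp_ne_zero _⟩

lemma exists_prod_sub_mul_interp {l : ℕ} {α : Fin l → ℂ} (hα : Function.Injective α)
    (T : Finset (Fin l)) {r : Fin l → ℂ} (hr : ∀ j ∉ T, r j ≠ 0) :
    ∃ E : ℂ → ℂ, Differentiable ℂ E ∧ (∀ z, E z ≠ 0) ∧
      ∀ j ∉ T, (∏ w ∈ T.image α, (α j - w)) * E (α j) = r j := by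
  have hprod : ∀ j ∉ T, ∏ w ∈ T.image α, (α j - w) ≠ 0 := by
    intro j hj
    rw [Finset.prod_image hα.injOn]
    simp only [Finset.prod_ne_zero_iff, sub_ne_zero, ne_eq, hα.eq_iff]
    rintro m hm rfl
    exact hj hm
  obtain ⟨E, hE, hEα, hE₀⟩ := exists_differentiable_interp_ne_zero hα
    (r := fun j => if j ∈ T then 1 else r j / ∏ w ∈ T.image α, (α j - w))
    fun j => by split_ifs with hj; exacts [one_ne_zero, div_ne_zero (hr j hj) (hprod j hj)]
  refine ⟨E, hE, hE₀, fun j hj => ?_⟩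
  rw [hEα, if_neg hj, mul_div_cancel₀ _ (hprod j hj)]

lemma differentiableAt_div_sub_mul {h u : ℂ → ℂ} {z₀ : ℂ} {U : Set ℂ} (hU : U ∈ 𝓝 z₀)
    (hh : DifferentiableOn ℂ h U) (hz₀ : h z₀ = 0) (hz₀' : deriv h z₀ = 0)
    (hu : DifferentiableAt ℂ u z₀) (hu₀ : u z₀ ≠ 0) :
    DifferentiableAt ℂ (fun z => h z / ((z - z₀) * u z)) z₀ := by
  have heq : (fun z => h z / ((z - z₀) * u z)) = fun z => dslope h z₀ z / u z := by
    funext z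
    rcases eq_or_ne z z₀ with rfl | hz
    -- at `z₀` the left side is `0` because `x / 0 = 0`, the right side because `deriv h z₀ = 0`
    · simp [hz₀']
    · rw [dslope_of_ne _ hz, slope_def_field, hz₀, sub_zero, div_div]
  rw [heq]
  exact (((Complex.differentiableOn_dslope hU).2 hh).differentiableAt hU).div hu hu₀

lemma differentiableOn_div_prod_sub_mul {h E : ℂ → ℂ} {U : Set ℂ} (hU : IsOpen U)
    (hh : DifferentiableOn ℂ h U) {S : Finset ℂ} (hS : ∀ w ∈ S, h w = 0 ∧ deriv h w = 0)
    (hE : Differentiable ℂ E) (hE₀ : ∀ z, E z ≠ 0) :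
    DifferentiableOn ℂ (fun z => h z / ((∏ w ∈ S, (z - w)) * E z)) U := by
  intro z hz
  refine DifferentiableAt.differentiableWithinAt ?_
  by_cases hzS : z ∈ S
  · have hfactor : ∀ x, (∏ w ∈ S, (x - w)) * E x = (x - z) * ((∏ w ∈ S.erase z, (x - w)) * E x) :=
      fun x => by rw [← Finset.mul_prod_erase S _ hzS, mul_assoc]
    simp only [hfactor]
    refine differentiableAt_div_sub_mul (hU.mem_nhds hz) hh (hS z hzS).1 (hS z hzS).2
      (by fun_prop) (mul_ne_zero ?_ (hE₀ z))
    exact Finset.prod_ne_zero_iff.2 fun w hw => sub_ne_zero.2 (Finset.ne_of_mem_erase hw).symm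
  · refine (hh.differentiableAt (hU.mem_nhds hz)).div (by fun_prop) (mul_ne_zero ?_ (hE₀ z))
    exact Finset.prod_ne_zero_iff.2 fun w hw => sub_ne_zero.2 fun h => hzS (h ▸ hw)

/-- Where `b = 0` the upper-right entry is `x / 0 = 0`, the value needed at a scalar node. -/
def modelMatrix (s p a b : ℂ) : Matrix (Fin 2) (Fin 2) ℂ :=
  !![s / 2 + a, (s ^ 2 / 4 - p - a ^ 2) / b; b, s / 2 - a]

lemma trace_modelMatrix (s p a b : ℂ) : (modelMatrix s p a b).trace = s := by
  simp [modelMatrix, Matrix.trace_fin_two]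

lemma det_modelMatrix {s p a b : ℂ} (h : b = 0 → s ^ 2 / 4 - p - a ^ 2 = 0) :
    (modelMatrix s p a b).det = p := by
  rw [modelMatrix, Matrix.det_fin_two_of]
  by_cases hb : b = 0
  · simp only [hb, div_zero, zero_mul, sub_zero]
    linear_combination h hb
  · field_simp
    ring

lemma modelMatrix_self {X : Matrix (Fin 2) (Fin 2) ℂ} (hX : X 1 0 ≠ 0) :
    modelMatrix X.trace X.det ((X 0 0 - X 1 1) / 2) (X 1 0) = X := by
  ext i j
  fin_cases i <;> fin_cases j <;>
    simp [modelMatrix, Matrix.trace_fin_two, Matrix.det_fin_two] <;> field_simp <;> ring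

lemma modelMatrix_smul_one (c : ℂ) :
    modelMatrix (c • 1 : Matrix (Fin 2) (Fin 2) ℂ).trace (c • 1 : Matrix (Fin 2) (Fin 2) ℂ).det 0 0
      = c • 1 := by
  ext i j
  fin_cases i <;> fin_cases j <;> simp [modelMatrix]

lemma matHolo_modelMatrix {s p a b : ℂ → ℂ} (hs : DifferentiableOn ℂ s unitDisc)
    (ha : DifferentiableOn ℂ a unitDisc) (hb : DifferentiableOn ℂ b unitDisc)
    (hc : DifferentiableOn ℂ (fun z => (s z ^ 2 / 4 - p z - a z ^ 2) / b z) unitDisc) :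
    MatHolo fun z => modelMatrix (s z) (p z) (a z) (b z) := by
  intro i j
  fin_cases i <;> fin_cases j
  · simpa [modelMatrix] using (hs.div_const 2).fun_add ha
  · simpa [modelMatrix] using hc
  · simpa [modelMatrix] using hb
  · simpa [modelMatrix] using (hs.div_const 2).fun_sub ha

lemma deriv_modelDefect_eq_zero {s p a : ℂ → ℂ} {z₀ c : ℂ} (hs : DifferentiableAt ℂ s z₀)
    (hp : DifferentiableAt ℂ p z₀) (ha : DifferentiableAt ℂ a z₀) (hs₀ : s z₀ = 2 * c)
    (ha₀ : a z₀ = 0) (hp' : deriv p z₀ = c * deriv s z₀) :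
    deriv (fun z => s z ^ 2 / 4 - p z - a z ^ 2) z₀ = 0 := by
  rw [deriv_fun_sub (by fun_prop) (by fun_prop), deriv_fun_sub (by fun_prop) hp,
    deriv_div_const, deriv_fun_pow hs, deriv_fun_pow ha, hs₀, ha₀, hp']
  ring

theorem exists_spectralBall_interp_of_apply_one_zero_ne_zero (k l : ℕ)
    {α : Fin l → ℂ} (hαinj : Function.Injective α) (hαD : ∀ j, α j ∈ unitDisc)
    {A : Fin l → Matrix (Fin 2) (Fin 2) ℂ} {lam : Fin l → ℂ}
    (hscal : ∀ j : Fin l, (j : ℕ) < k → A j = lam j • (1 : Matrix (Fin 2) (Fin 2) ℂ))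
    (hA₁₀ : ∀ j : Fin l, ¬ (j : ℕ) < k → A j 1 0 ≠ 0)
    {φ : ℂ → Fin 2 → ℂ} (hφ : DifferentiableOn ℂ φ unitDisc)
    (hφG : Set.MapsTo φ unitDisc (SymPolydisc 2)) (hφα : ∀ j, φ (α j) = sigmaCoeff 2 (A j))
    (hφ' : ∀ j : Fin l, (j : ℕ) < k →
      deriv (fun z => φ z 1) (α j) = lam j * deriv (fun z => φ z 0) (α j)) :
    ∃ ψ : ℂ → Matrix (Fin 2) (Fin 2) ℂ, MatHolo ψ ∧
      Set.MapsTo ψ unitDisc (SpectralBall 2) ∧ ∀ j, ψ (α j) = A j := by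
  set s : ℂ → ℂ := fun z => φ z 0
  set p : ℂ → ℂ := fun z => φ z 1
  have hs : DifferentiableOn ℂ s unitDisc := differentiableOn_pi.1 hφ 0
  have hp : DifferentiableOn ℂ p unitDisc := differentiableOn_pi.1 hφ 1
  have hsα : ∀ j, s (α j) = (A j).trace := fun j => by simp [s, hφα, sigmaCoeff_two]
  have hpα : ∀ j, p (α j) = (A j).det := fun j => by simp [p, hφα, sigmaCoeff_two]
  set T := Finset.univ.filter fun j : Fin l => (j : ℕ) < k
  obtain ⟨a, ha, haα⟩ := exists_differentiable_interp hαinj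
    fun j => if (j : ℕ) < k then 0 else (A j 0 0 - A j 1 1) / 2
  obtain ⟨E, hE, hE₀, hEα⟩ := exists_prod_sub_mul_interp hαinj T (r := fun j => A j 1 0)
    fun j hj => hA₁₀ j (by simpa [T] using hj)
  set h : ℂ → ℂ := fun z => s z ^ 2 / 4 - p z - a z ^ 2
  have hdefect : ∀ w ∈ T.image α, h w = 0 ∧ deriv h w = 0 := by
    simp only [T, Finset.mem_image, Finset.mem_filter, Finset.mem_univ, true_and]
    rintro _ ⟨j, hj, rfl⟩
    have haj : a (α j) = 0 := by simp [haα, hj]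
    have hsj : s (α j) = 2 * lam j := by simp [hsα, hscal j hj, mul_comm]
    have hpj : p (α j) = lam j ^ 2 := by simp [hpα, hscal j hj, sq]
    refine ⟨?_, deriv_modelDefect_eq_zero (hs.differentiableAt (isOpen_ball.mem_nhds (hαD j)))
      (hp.differentiableAt (isOpen_ball.mem_nhds (hαD j))) ha.differentiableAt hsj haj (hφ' j hj)⟩
    simp only [h, hsj, hpj, haj]
    ring
  set b : ℂ → ℂ := fun z => (∏ w ∈ T.image α, (z - w)) * E z
  refine ⟨fun z => modelMatrix (s z) (p z) (a z) (b z), ?_, fun z hz => ?_, fun j => ?_⟩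
  · exact matHolo_modelMatrix hs ha.differentiableOn (by fun_prop)
      (differentiableOn_div_prod_sub_mul isOpen_ball (by fun_prop) hdefect hE hE₀)
  · rw [← sigmaCoeff_mem_symPolydisc_iff, sigmaCoeff_two, trace_modelMatrix, det_modelMatrix]
    · convert hφG hz
      funext i
      fin_cases i <;> rfl
    · intro hb
      obtain ⟨w, hw, hzw⟩ := Finset.prod_eq_zero_iff.1 ((mul_eq_zero.1 hb).resolve_right (hE₀ z))
      rw [sub_eq_zero.1 hzw]
      exact (hdefect w hw).1
  · by_cases hj : (j : ℕ) < k
    · have hb : b (α j) = 0 := mul_eq_zero_of_left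
        (Finset.prod_eq_zero (Finset.mem_image_of_mem α (by simpa [T] using hj)) (sub_self _)) _
      simp only [hb, hsα, hpα, haα, if_pos hj]
      rw [hscal j hj, modelMatrix_smul_one]
    · have hb : b (α j) = A j 1 0 := hEα j (by simpa [T] using hj)
      simp only [hb, hsα, hpα, haα, if_neg hj]
      exact modelMatrix_self (hA₁₀ j hj)

lemma exists_spectralBall_interp_of_conj {n l : ℕ} {α : Fin l → ℂ}
    {A : Fin l → Matrix (Fin n) (Fin n) ℂ} {P Q : Matrix (Fin n) (Fin n) ℂ} (hPQ : P * Q = 1)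
    (hQP : Q * P = 1)
    (h : ∃ ψ : ℂ → Matrix (Fin n) (Fin n) ℂ, MatHolo ψ ∧
      Set.MapsTo ψ unitDisc (SpectralBall n) ∧ ∀ j, ψ (α j) = Q * A j * P) :
    ∃ ψ : ℂ → Matrix (Fin n) (Fin n) ℂ, MatHolo ψ ∧
      Set.MapsTo ψ unitDisc (SpectralBall n) ∧ ∀ j, ψ (α j) = A j := by
  obtain ⟨ψ, hψ, hψΩ, hψα⟩ := h
  refine ⟨fun z => P * ψ z * Q, hψ.mul_mul_const P Q, fun z hz => ?_, fun j => ?_⟩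
  · rw [← sigmaCoeff_mem_symPolydisc_iff, sigmaCoeff_mul_mul_of_mul_eq_one hQP]
    exact sigmaCoeff_mem_symPolydisc_iff.2 (hψΩ hz)
  · simp only [hψα, ← Matrix.mul_assoc, hPQ, Matrix.one_mul]
    rw [Matrix.mul_assoc, hPQ, Matrix.mul_one]

theorem stmt_1_general (k l : ℕ)
    (α : Fin l → ℂ) (hαinj : Function.Injective α) (hαD : ∀ j, α j ∈ unitDisc)
    (A : Fin l → Matrix (Fin 2) (Fin 2) ℂ) (lam : Fin l → ℂ)
    (hscal : ∀ j : Fin l, (j : ℕ) < k → A j = lam j • (1 : Matrix (Fin 2) (Fin 2) ℂ))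
    (hnonscal : ∀ j : Fin l, k ≤ (j : ℕ) → ¬ IsScalarMatrix (A j)) :
    (∃ ψ : ℂ → Matrix (Fin 2) (Fin 2) ℂ, MatHolo ψ ∧
        Set.MapsTo ψ unitDisc (SpectralBall 2) ∧
        (∀ j, ψ (α j) = A j)) ↔
      (∃ φ : ℂ → Fin 2 → ℂ, DifferentiableOn ℂ φ unitDisc ∧
        Set.MapsTo φ unitDisc (SymPolydisc 2) ∧
        (∀ j, φ (α j) = sigmaCoeff 2 (A j)) ∧
        (∀ j : Fin l, (j : ℕ) < k →
          deriv (fun z => φ z 1) (α j) = lam j * deriv (fun z => φ z 0) (α j))) := by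
  constructor
  · rintro ⟨ψ, hψ, hψΩ, hψα⟩
    refine ⟨fun z => sigmaCoeff 2 (ψ z), hψ.sigmaCoeff_two,
      fun z hz => sigmaCoeff_mem_symPolydisc_iff.2 (hψΩ hz), fun j => congrArg _ (hψα j),
      fun j hj => ?_⟩
    simpa [sigmaCoeff_two] using deriv_det_eq_mul_deriv_trace
      (fun i i' => (hψ i i').differentiableAt (isOpen_ball.mem_nhds (hαD j)))
      ((hψα j).trans (hscal j hj))
  · rintro ⟨φ, hφ, hφG, hφα, hφ'⟩
    obtain ⟨t, ht⟩ := exists_transvection_conj_apply_one_zero_ne_zero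
      (Finset.univ.filter fun j : Fin l => ¬ (j : ℕ) < k) A
      (by simpa using fun j hj => hnonscal j (not_lt.1 hj))
    set P : Matrix (Fin 2) (Fin 2) ℂ := Matrix.transvection 1 0 t
    set Q : Matrix (Fin 2) (Fin 2) ℂ := Matrix.transvection 1 0 (-t)
    have hPQ : P * Q = 1 := transvection_mul_transvection_neg t
    have hQP : Q * P = 1 := transvection_neg_mul_transvection t
    exact exists_spectralBall_interp_of_conj hPQ hQP <|
      exists_spectralBall_interp_of_apply_one_zero_ne_zero k l hαinj hαD
        (fun j hj => by rw [hscal j hj, Matrix.mul_smul, Matrix.mul_one, Matrix.smul_mul, hQP])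
        (fun j hj => ht j (by simpa using hj)) hφ hφG
        (fun j => by rw [hφα, sigmaCoeff_mul_mul_of_mul_eq_one hPQ]) hφ'

/-- Corollary 2: solvability of the spectral Nevanlinna–Pick
problem on `Ω_2` is equivalent to a modified interpolation problem on `𝔾_2`. -/
theorem stmt_1 (k l : ℕ) (hkl : k ≤ l)
    (α : Fin l → ℂ) (hαinj : Function.Injective α) (hαD : ∀ j, α j ∈ unitDisc)
    (A : Fin l → Matrix (Fin 2) (Fin 2) ℂ) (lam : Fin l → ℂ)
    (hA : ∀ j, A j ∈ SpectralBall 2)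
    (hscal : ∀ j : Fin l, (j : ℕ) < k → A j = lam j • (1 : Matrix (Fin 2) (Fin 2) ℂ))
    (hnonscal : ∀ j : Fin l, k ≤ (j : ℕ) → ¬ IsScalarMatrix (A j)) :
    (∃ ψ : ℂ → Matrix (Fin 2) (Fin 2) ℂ, MatHolo ψ ∧
        Set.MapsTo ψ unitDisc (SpectralBall 2) ∧
        (∀ j, ψ (α j) = A j)) ↔
      (∃ φ : ℂ → Fin 2 → ℂ, DifferentiableOn ℂ φ unitDisc ∧
        Set.MapsTo φ unitDisc (SymPolydisc 2) ∧
        (∀ j, φ (α j) = sigmaCoeff 2 (A j)) ∧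
        (∀ j : Fin l, (j : ℕ) < k →
          deriv (fun z => φ z 1) (α j) = lam j * deriv (fun z => φ z 0) (α j))) :=
  stmt_1_general k l α hαinj hαD A lam hscal hnonscal
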